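/- arXiv:1504.02773 — 3 statements merged into one kernel-verified Lean document; each statement's English description precedes it below -/
import Mathlib

section
/- (Theorem 3.19(ii), boundedness of G_ω, componentwise.) Let ã₁, …, ãₙ be BNNs with ãⱼ = (Tⱼ⁺, Iⱼ⁺, Fⱼ⁺, Tⱼ⁻, Iⱼ⁻, Fⱼ⁻). Then each of the six components of G_ω(ã₁, …, ãₙ) lies between the minimum and the maximum of the corresponding input components: min_j Tⱼ⁺ ≤ ∏ⱼ(Tⱼ⁺)^{ωⱼ} ≤ max_j Tⱼ⁺; min_j Iⱼ⁺ ≤ 1 − ∏ⱼ(1 − Iⱼ⁺)^{ωⱼ} ≤ max_j Iⱼ⁺; min_j Fⱼ⁺ ≤ 1 − ∏ⱼ(1 − Fⱼ⁺)^{ωⱼ} ≤ max_j Fⱼ⁺; min_j Tⱼ⁻ ≤ −(1 − ∏ⱼ(1 − (−Tⱼ⁻))^{ωⱼ}) ≤ max_j Tⱼ⁻; min_j Iⱼ⁻ ≤ −∏ⱼ(−Iⱼ⁻)^{ωⱼ} ≤ max_j Iⱼ⁻; and min_j Fⱼ⁻ ≤ −∏ⱼ(−Fⱼ⁻)^{ωⱼ}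 ≤ max_j Fⱼ⁻. -/
/-! The weighted geometric mean of numbers in `[a, b]`, with `0 ≤ a`, lies in `[a, b]`: raising
the bounds to the weights and multiplying gives `a ^ ∑ w = a` and `b ^ ∑ w = b`. Each component
of `G_ω` is the weighted geometric mean of a family obtained from the inputs by `x ↦ 1 - x`,
`x ↦ -x` or `x ↦ 1 + x`, and these maps exchange or preserve the minimum and maximum. -/

/-- Minimum of a finite family of real numbers indexed by `Fin n` with `0 < n`. -/
noncomputable def finMin {n : ℕ} (hn : 1 ≤ n) (x : Fin n → ℝ) : ℝ :=
  Finset.univ.inf' (Finset.univ_nonempty_iff.mpr (Fin.pos_iff_nonempty.mp hn)) x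

/-- Maximum of a finite family of real numbers indexed by `Fin n` with `0 < n`. -/
noncomputable def finMax {n : ℕ} (hn : 1 ≤ n) (x : Fin n → ℝ) : ℝ :=
  Finset.univ.sup' (Finset.univ_nonempty_iff.mpr (Fin.pos_iff_nonempty.mp hn)) x

open Finset

theorem Real.prod_rpow_mem_Icc {ι : Type*} (s : Finset ι) {w x : ι → ℝ} {a b : ℝ}
    (hw : ∀ i ∈ s, 0 ≤ w i) (hsum : ∑ i ∈ s, w i = 1) (ha : 0 ≤ a)
    (hx : ∀ i ∈ s, x i ∈ Set.Icc a b) :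
    ∏ i ∈ s, x i ^ w i ∈ Set.Icc a b := by
  have hb : 0 ≤ b := by
    obtain ⟨i, hi⟩ : s.Nonempty := nonempty_of_sum_ne_zero (by rw [hsum]; exact one_ne_zero)
    exact ha.trans ((hx i hi).1.trans (hx i hi).2)
  have hpow_sum {c : ℝ} (hc : 0 ≤ c) : ∏ i ∈ s, c ^ w i = c := by
    rw [← Real.rpow_sum_of_nonneg hc hw, hsum, Real.rpow_one]
  constructor
  · calc a = ∏ i ∈ s, a ^ w i := (hpow_sum ha).symm
      _ ≤ ∏ i ∈ s, x i ^ w i :=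
        prod_le_prod (fun i _ => Real.rpow_nonneg ha _)
          (fun i hi => Real.rpow_le_rpow ha (hx i hi).1 (hw i hi))
  · calc ∏ i ∈ s, x i ^ w i ≤ ∏ i ∈ s, b ^ w i :=
        prod_le_prod (fun i hi => Real.rpow_nonneg (ha.trans (hx i hi).1) _)
          (fun i hi => Real.rpow_le_rpow (ha.trans (hx i hi).1) (hx i hi).2 (hw i hi))
      _ = b := hpow_sum hb

section FinMinMax

variable {n : ℕ} (hn : 1 ≤ n)

theorem finMin_le (x : Fin n → ℝ) (j : Fin n) : finMin hn x ≤ x j :=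
  inf'_le _ (mem_univ j)

theorem le_finMax (x : Fin n → ℝ) (j : Fin n) : x j ≤ finMax hn x :=
  le_sup' _ (mem_univ j)

theorem le_finMin {x : Fin n → ℝ} {a : ℝ} (h : ∀ j, a ≤ x j) : a ≤ finMin hn x :=
  le_inf' _ _ fun j _ => h j

theorem finMax_le {x : Fin n → ℝ} {b : ℝ} (h : ∀ j, x j ≤ b) : finMax hn x ≤ b :=
  sup'_le _ _ fun j _ => h j

variable {ω : Fin n → ℝ} (hω : ∀ j, 0 ≤ ω j) (hsum : ∑ j, ω j = 1)
include hω hsum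

theorem prod_rpow_mem_Icc_finMin_finMax {x : Fin n → ℝ} (hx : ∀ j, 0 ≤ x j) :
    ∏ j, x j ^ ω j ∈ Set.Icc (finMin hn x) (finMax hn x) :=
  Real.prod_rpow_mem_Icc univ (fun j _ => hω j) hsum (le_finMin hn hx)
    fun j _ => ⟨finMin_le hn x j, le_finMax hn x j⟩

theorem one_sub_prod_one_sub_rpow_mem_Icc {x : Fin n → ℝ} (hx : ∀ j, x j ≤ 1) :
    1 - ∏ j, (1 - x j) ^ ω j ∈ Set.Icc (finMin hn x) (finMax hn x) := by
  have h := Real.prod_rpow_mem_Icc univ (x := fun j => 1 - x j) (fun j _ => hω j) hsum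
    (sub_nonneg.mpr (finMax_le hn hx))
    fun j _ => ⟨sub_le_sub_left (le_finMax hn x j) 1, sub_le_sub_left (finMin_le hn x j) 1⟩
  constructor <;> linarith [h.1, h.2]

theorem neg_one_sub_prod_one_sub_neg_rpow_mem_Icc {x : Fin n → ℝ} (hx : ∀ j, -1 ≤ x j) :
    -(1 - ∏ j, (1 - -x j) ^ ω j) ∈ Set.Icc (finMin hn x) (finMax hn x) := by
  have h := Real.prod_rpow_mem_Icc univ (x := fun j => 1 - -x j) (b := 1 - -finMax hn x)
    (fun j _ => hω j) hsum (by linarith [le_finMin hn hx] : 0 ≤ 1 - -finMin hn x)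
    fun j _ => ⟨by linarith [finMin_le hn x j], by linarith [le_finMax hn x j]⟩
  constructor <;> linarith [h.1, h.2]

theorem neg_prod_neg_rpow_mem_Icc {x : Fin n → ℝ} (hx : ∀ j, x j ≤ 0) :
    -∏ j, (-x j) ^ ω j ∈ Set.Icc (finMin hn x) (finMax hn x) := by
  have h := Real.prod_rpow_mem_Icc univ (x := fun j => -x j) (fun j _ => hω j) hsum
    (neg_nonneg.mpr (finMax_le hn hx))
    fun j _ => ⟨neg_le_neg (le_finMax hn x j), neg_le_neg (finMin_le hn x j)⟩
  constructor <;> linarith [h.1, h.2]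

end FinMinMax

theorem Gw_bounded
    (n : ℕ) (hn : 1 ≤ n) (ω : Fin n → ℝ)
    (hω : ∀ j, 0 ≤ ω j) (hsum : ∑ j, ω j = 1)
    (Tp Ip Fp Tm Im Fm : Fin n → ℝ)
    (hTp : ∀ j, Tp j ∈ Set.Icc (0 : ℝ) 1) (hIp : ∀ j, Ip j ∈ Set.Icc (0 : ℝ) 1)
    (hFp : ∀ j, Fp j ∈ Set.Icc (0 : ℝ) 1) (hTm : ∀ j, Tm j ∈ Set.Icc (-1 : ℝ) 0)
    (hIm : ∀ j, Im j ∈ Set.Icc (-1 : ℝ) 0) (hFm : ∀ j, Fm j ∈ Set.Icc (-1 : ℝ) 0) :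
    (finMin hn Tp ≤ ∏ j, (Tp j) ^ (ω j) ∧
      ∏ j, (Tp j) ^ (ω j) ≤ finMax hn Tp) ∧
    (finMin hn Ip ≤ 1 - ∏ j, (1 - Ip j) ^ (ω j) ∧
      1 - ∏ j, (1 - Ip j) ^ (ω j) ≤ finMax hn Ip) ∧
    (finMin hn Fp ≤ 1 - ∏ j, (1 - Fp j) ^ (ω j) ∧
      1 - ∏ j, (1 - Fp j) ^ (ω j) ≤ finMax hn Fp) ∧
    (finMin hn Tm ≤ -(1 - ∏ j, (1 - (-(Tm j))) ^ (ω j)) ∧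
      -(1 - ∏ j, (1 - (-(Tm j))) ^ (ω j)) ≤ finMax hn Tm) ∧
    (finMin hn Im ≤ -(∏ j, (-(Im j)) ^ (ω j)) ∧
      -(∏ j, (-(Im j)) ^ (ω j)) ≤ finMax hn Im) ∧
    (finMin hn Fm ≤ -(∏ j, (-(Fm j)) ^ (ω j)) ∧
      -(∏ j, (-(Fm j)) ^ (ω j)) ≤ finMax hn Fm) :=
  ⟨prod_rpow_mem_Icc_finMin_finMax hn hω hsum fun j => (hTp j).1,
    one_sub_prod_one_sub_rpow_mem_Icc hn hω hsum fun j => (hIp j).2,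
    one_sub_prod_one_sub_rpow_mem_Icc hn hω hsum fun j => (hFp j).2,
    neg_one_sub_prod_one_sub_neg_rpow_mem_Icc hn hω hsum fun j => (hTm j).1,
    neg_prod_neg_rpow_mem_Icc hn hω hsum fun j => (hIm j).2,
    neg_prod_neg_rpow_mem_Icc hn hω hsum fun j => (hFm j).2⟩
end

section
/- (Theorem 3.17(iii), monotonicity of A_ω.) Let ã₁, …, ãₙ and ã₁*, …, ãₙ* be BNNs with ãⱼ ⊑ ãⱼ* for all j = 1, …, n. Then A_ω(ã₁, …, ãₙ) ⊑ A_ω(ã₁*, …, ãₙ*), i.e. writing the six components of A_ω(ã₁,…,ãₙ) as (T⁺, I⁺, F⁺, T⁻, I⁻, F⁻) and those of A_ω(ã₁*,…,ãₙ*) as (T⁺*, I⁺*, F⁺*, T⁻*, I⁻*, F⁻*), one has T⁺ ≤ T⁺*, I⁺ ≤ I⁺*, F⁺ ≥ F⁺*, T⁻ ≥ T⁻*, I⁻ ≥ I⁻*, and F⁻ ≤ F⁻*. -/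
namespace Real

variable {ι : Type*} {s : Finset ι} {ω a b : ι → ℝ}

theorem prod_rpow_le_prod_rpow (hω : ∀ j ∈ s, 0 ≤ ω j) (ha : ∀ j ∈ s, 0 ≤ a j)
    (hab : ∀ j ∈ s, a j ≤ b j) :
    ∏ j ∈ s, a j ^ ω j ≤ ∏ j ∈ s, b j ^ ω j :=
  Finset.prod_le_prod (fun j hj => rpow_nonneg (ha j hj) _)
    fun j hj => rpow_le_rpow (ha j hj) (hab j hj) (hω j hj)

theorem one_sub_prod_one_sub_rpow_le (hω : ∀ j ∈ s, 0 ≤ ω j) (hb : ∀ j ∈ s, b j ≤ 1)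
    (hab : ∀ j ∈ s, a j ≤ b j) :
    1 - ∏ j ∈ s, (1 - a j) ^ ω j ≤ 1 - ∏ j ∈ s, (1 - b j) ^ ω j :=
  sub_le_sub_left (prod_rpow_le_prod_rpow hω (fun j hj => sub_nonneg.2 (hb j hj))
    fun j hj => sub_le_sub_left (hab j hj) 1) 1

end Real

theorem Aw_monotone_general
    (n : ℕ) (ω : Fin n → ℝ)
    (hω : ∀ j, 0 ≤ ω j)
    (Tp Ip Fp Tm Im Fm Tp' Ip' Fp' Tm' Im' Fm' : Fin n → ℝ)
    (hIp : ∀ j, Ip j ∈ Set.Icc (0 : ℝ) 1)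
    (hTm : ∀ j, Tm j ∈ Set.Icc (-1 : ℝ) 0)
    (hFm : ∀ j, Fm j ∈ Set.Icc (-1 : ℝ) 0)
    (hTp' : ∀ j, Tp' j ∈ Set.Icc (0 : ℝ) 1)
    (hFp' : ∀ j, Fp' j ∈ Set.Icc (0 : ℝ) 1)
    (hIm' : ∀ j, Im' j ∈ Set.Icc (-1 : ℝ) 0)
    (hle : ∀ j, Tp j ≤ Tp' j ∧ Ip j ≤ Ip' j ∧ Fp j ≥ Fp' j ∧
      Tm j ≥ Tm' j ∧ Im j ≥ Im' j ∧ Fm j ≤ Fm' j) :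
    (1 - ∏ j, (1 - Tp j) ^ (ω j) ≤ 1 - ∏ j, (1 - Tp' j) ^ (ω j)) ∧
    (∏ j, (Ip j) ^ (ω j) ≤ ∏ j, (Ip' j) ^ (ω j)) ∧
    (∏ j, (Fp j) ^ (ω j) ≥ ∏ j, (Fp' j) ^ (ω j)) ∧
    (-(∏ j, (-(Tm j)) ^ (ω j)) ≥ -(∏ j, (-(Tm' j)) ^ (ω j))) ∧
    (-(1 - ∏ j, (1 - (-(Im j))) ^ (ω j)) ≥ -(1 - ∏ j, (1 - (-(Im' j))) ^ (ω j))) ∧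
    (-(1 - ∏ j, (1 - (-(Fm j))) ^ (ω j)) ≤ -(1 - ∏ j, (1 - (-(Fm' j))) ^ (ω j))) := by
  have hω' : ∀ j ∈ Finset.univ, 0 ≤ ω j := fun j _ => hω j
  refine ⟨?_, ?_, ?_, ?_, ?_, ?_⟩
  · exact Real.one_sub_prod_one_sub_rpow_le hω' (fun j _ => (hTp' j).2) fun j _ => (hle j).1
  · exact Real.prod_rpow_le_prod_rpow hω' (fun j _ => (hIp j).1) fun j _ => (hle j).2.1
  · exact Real.prod_rpow_le_prod_rpow hω' (fun j _ => (hFp' j).1) fun j _ => (hle j).2.2.1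
  · exact neg_le_neg <| Real.prod_rpow_le_prod_rpow hω' (fun j _ => neg_nonneg.2 (hTm j).2)
      fun j _ => neg_le_neg (hle j).2.2.2.1
  · exact neg_le_neg <| Real.one_sub_prod_one_sub_rpow_le hω'
      (fun j _ => neg_le.1 (hIm' j).1) fun j _ => neg_le_neg (hle j).2.2.2.2.1
  · exact neg_le_neg <| Real.one_sub_prod_one_sub_rpow_le hω'
      (fun j _ => neg_le.1 (hFm j).1) fun j _ => neg_le_neg (hle j).2.2.2.2.2

theorem Aw_monotone
    (n : ℕ) (hn : 1 ≤ n) (ω : Fin n → ℝ)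
    (hω : ∀ j, 0 ≤ ω j) (hsum : ∑ j, ω j = 1)
    (Tp Ip Fp Tm Im Fm Tp' Ip' Fp' Tm' Im' Fm' : Fin n → ℝ)
    (hTp : ∀ j, Tp j ∈ Set.Icc (0 : ℝ) 1) (hIp : ∀ j, Ip j ∈ Set.Icc (0 : ℝ) 1)
    (hFp : ∀ j, Fp j ∈ Set.Icc (0 : ℝ) 1) (hTm : ∀ j, Tm j ∈ Set.Icc (-1 : ℝ) 0)
    (hIm : ∀ j, Im j ∈ Set.Icc (-1 : ℝ) 0) (hFm : ∀ j, Fm j ∈ Set.Icc (-1 : ℝ) 0)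
    (hTp' : ∀ j, Tp' j ∈ Set.Icc (0 : ℝ) 1) (hIp' : ∀ j, Ip' j ∈ Set.Icc (0 : ℝ) 1)
    (hFp' : ∀ j, Fp' j ∈ Set.Icc (0 : ℝ) 1) (hTm' : ∀ j, Tm' j ∈ Set.Icc (-1 : ℝ) 0)
    (hIm' : ∀ j, Im' j ∈ Set.Icc (-1 : ℝ) 0) (hFm' : ∀ j, Fm' j ∈ Set.Icc (-1 : ℝ) 0)
    (hle : ∀ j, Tp j ≤ Tp' j ∧ Ip j ≤ Ip' j ∧ Fp j ≥ Fp' j ∧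
      Tm j ≥ Tm' j ∧ Im j ≥ Im' j ∧ Fm j ≤ Fm' j) :
    (1 - ∏ j, (1 - Tp j) ^ (ω j) ≤ 1 - ∏ j, (1 - Tp' j) ^ (ω j)) ∧
    (∏ j, (Ip j) ^ (ω j) ≤ ∏ j, (Ip' j) ^ (ω j)) ∧
    (∏ j, (Fp j) ^ (ω j) ≥ ∏ j, (Fp' j) ^ (ω j)) ∧
    (-(∏ j, (-(Tm j)) ^ (ω j)) ≥ -(∏ j, (-(Tm' j)) ^ (ω j))) ∧
    (-(1 - ∏ j, (1 - (-(Im j))) ^ (ω j)) ≥ -(1 - ∏ j, (1 - (-(Im' j))) ^ (ω j))) ∧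
    (-(1 - ∏ j, (1 - (-(Fm j))) ^ (ω j)) ≤ -(1 - ∏ j, (1 - (-(Fm' j))) ^ (ω j))) :=
  Aw_monotone_general n ω hω Tp Ip Fp Tm Im Fm Tp' Ip' Fp' Tm' Im' Fm' hIp hTm hFm hTp' hFp' hIm'
    hle
end

section
/- (Theorem 3.19(iii), monotonicity of G_ω.) Let ã₁, …, ãₙ and ã₁*, …, ãₙ* be BNNs with ãⱼ ⊑ ãⱼ* for all j = 1, …, n. Then G_ω(ã₁, …, ãₙ) ⊑ G_ω(ã₁*, …, ãₙ*), i.e. writing the six components of G_ω(ã₁,…,ãₙ) as (T⁺, I⁺, F⁺, T⁻, I⁻, F⁻) and those of G_ω(ã₁*,…,ãₙ*) as (T⁺*, I⁺*, F⁺*, T⁻*, I⁻*, F⁻*), one has T⁺ ≤ T⁺*, I⁺ ≤ I⁺*, F⁺ ≥ F⁺*, T⁻ ≥ T⁻*, I⁻ ≥ I⁻*, and F⁻ ≤ F⁻*. -/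
open Finset

section

variable {ι : Type*} (s : Finset ι) {ω f g : ι → ℝ}

theorem prod_rpow_le_prod_rpow (hω : ∀ j ∈ s, 0 ≤ ω j) (hf : ∀ j ∈ s, 0 ≤ f j)
    (hfg : ∀ j ∈ s, f j ≤ g j) : ∏ j ∈ s, f j ^ ω j ≤ ∏ j ∈ s, g j ^ ω j :=
  prod_le_prod (fun j hj => Real.rpow_nonneg (hf j hj) _)
    (fun j hj => Real.rpow_le_rpow (hf j hj) (hfg j hj) (hω j hj))

theorem one_sub_prod_one_sub_rpow_le (hω : ∀ j ∈ s, 0 ≤ ω j) (hg : ∀ j ∈ s, g j ≤ 1)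
    (hfg : ∀ j ∈ s, f j ≤ g j) :
    1 - ∏ j ∈ s, (1 - f j) ^ ω j ≤ 1 - ∏ j ∈ s, (1 - g j) ^ ω j :=
  sub_le_sub_left (prod_rpow_le_prod_rpow s hω (fun j hj => sub_nonneg.2 (hg j hj))
    (fun j hj => sub_le_sub_left (hfg j hj) 1)) 1

end

theorem Gw_monotone_general
    (n : ℕ) (ω : Fin n → ℝ)
    (hω : ∀ j, 0 ≤ ω j)
    (Tp Ip Fp Tm Im Fm Tp' Ip' Fp' Tm' Im' Fm' : Fin n → ℝ)
    (hTp : ∀ j, Tp j ∈ Set.Icc (0 : ℝ) 1)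
    (hFp : ∀ j, Fp j ∈ Set.Icc (0 : ℝ) 1)
    (hIm : ∀ j, Im j ∈ Set.Icc (-1 : ℝ) 0)
    (hIp' : ∀ j, Ip' j ∈ Set.Icc (0 : ℝ) 1)
    (hTm' : ∀ j, Tm' j ∈ Set.Icc (-1 : ℝ) 0)
    (hFm' : ∀ j, Fm' j ∈ Set.Icc (-1 : ℝ) 0)
    (hle : ∀ j, Tp j ≤ Tp' j ∧ Ip j ≤ Ip' j ∧ Fp j ≥ Fp' j ∧
      Tm j ≥ Tm' j ∧ Im j ≥ Im' j ∧ Fm j ≤ Fm' j) :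
    (∏ j, (Tp j) ^ (ω j) ≤ ∏ j, (Tp' j) ^ (ω j)) ∧
    (1 - ∏ j, (1 - Ip j) ^ (ω j) ≤ 1 - ∏ j, (1 - Ip' j) ^ (ω j)) ∧
    (1 - ∏ j, (1 - Fp j) ^ (ω j) ≥ 1 - ∏ j, (1 - Fp' j) ^ (ω j)) ∧
    (-(1 - ∏ j, (1 - (-(Tm j))) ^ (ω j)) ≥ -(1 - ∏ j, (1 - (-(Tm' j))) ^ (ω j))) ∧
    (-(∏ j, (-(Im j)) ^ (ω j)) ≥ -(∏ j, (-(Im' j)) ^ (ω j))) ∧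
    (-(∏ j, (-(Fm j)) ^ (ω j)) ≤ -(∏ j, (-(Fm' j)) ^ (ω j))) := by
  have hω' : ∀ j ∈ univ, 0 ≤ ω j := fun j _ => hω j
  refine ⟨?_, ?_, ?_, neg_le_neg ?_, neg_le_neg ?_, neg_le_neg ?_⟩
  · exact prod_rpow_le_prod_rpow _ hω' (fun j _ => (hTp j).1) (fun j _ => (hle j).1)
  · exact one_sub_prod_one_sub_rpow_le _ hω' (fun j _ => (hIp' j).2) (fun j _ => (hle j).2.1)
  · exact one_sub_prod_one_sub_rpow_le _ hω' (fun j _ => (hFp j).2) (fun j _ => (hle j).2.2.1)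
  · exact one_sub_prod_one_sub_rpow_le (f := fun j => -Tm j) (g := fun j => -Tm' j) _ hω'
      (fun j _ => neg_le.1 (hTm' j).1) (fun j _ => neg_le_neg (hle j).2.2.2.1)
  · exact prod_rpow_le_prod_rpow (f := fun j => -Im j) (g := fun j => -Im' j) _ hω'
      (fun j _ => neg_nonneg.2 (hIm j).2) (fun j _ => neg_le_neg (hle j).2.2.2.2.1)
  · exact prod_rpow_le_prod_rpow (f := fun j => -Fm' j) (g := fun j => -Fm j) _ hω'
      (fun j _ => neg_nonneg.2 (hFm' j).2) (fun j _ => neg_le_neg (hle j).2.2.2.2.2)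

theorem Gw_monotone
    (n : ℕ) (hn : 1 ≤ n) (ω : Fin n → ℝ)
    (hω : ∀ j, 0 ≤ ω j) (hsum : ∑ j, ω j = 1)
    (Tp Ip Fp Tm Im Fm Tp' Ip' Fp' Tm' Im' Fm' : Fin n → ℝ)
    (hTp : ∀ j, Tp j ∈ Set.Icc (0 : ℝ) 1) (hIp : ∀ j, Ip j ∈ Set.Icc (0 : ℝ) 1)
    (hFp : ∀ j, Fp j ∈ Set.Icc (0 : ℝ) 1) (hTm : ∀ j, Tm j ∈ Set.Icc (-1 : ℝ) 0)
    (hIm : ∀ j, Im j ∈ Set.Icc (-1 : ℝ) 0) (hFm : ∀ j, Fm j ∈ Set.Icc (-1 : ℝ) 0)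
    (hTp' : ∀ j, Tp' j ∈ Set.Icc (0 : ℝ) 1) (hIp' : ∀ j, Ip' j ∈ Set.Icc (0 : ℝ) 1)
    (hFp' : ∀ j, Fp' j ∈ Set.Icc (0 : ℝ) 1) (hTm' : ∀ j, Tm' j ∈ Set.Icc (-1 : ℝ) 0)
    (hIm' : ∀ j, Im' j ∈ Set.Icc (-1 : ℝ) 0) (hFm' : ∀ j, Fm' j ∈ Set.Icc (-1 : ℝ) 0)
    (hle : ∀ j, Tp j ≤ Tp' j ∧ Ip j ≤ Ip' j ∧ Fp j ≥ Fp' j ∧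
      Tm j ≥ Tm' j ∧ Im j ≥ Im' j ∧ Fm j ≤ Fm' j) :
    (∏ j, (Tp j) ^ (ω j) ≤ ∏ j, (Tp' j) ^ (ω j)) ∧
    (1 - ∏ j, (1 - Ip j) ^ (ω j) ≤ 1 - ∏ j, (1 - Ip' j) ^ (ω j)) ∧
    (1 - ∏ j, (1 - Fp j) ^ (ω j) ≥ 1 - ∏ j, (1 - Fp' j) ^ (ω j)) ∧
    (-(1 - ∏ j, (1 - (-(Tm j))) ^ (ω j)) ≥ -(1 - ∏ j, (1 - (-(Tm' j))) ^ (ω j))) ∧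
    (-(∏ j, (-(Im j)) ^ (ω j)) ≥ -(∏ j, (-(Im' j)) ^ (ω j))) ∧
    (-(∏ j, (-(Fm j)) ^ (ω j)) ≤ -(∏ j, (-(Fm' j)) ^ (ω j))) :=
  Gw_monotone_general n ω hω Tp Ip Fp Tm Im Fm Tp' Ip' Fp' Tm' Im' Fm' hTp hFp hIm hIp' hTm' hFm'
    hle
end
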